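/- arXiv:1907.09633 — 4 statements merged into one kernel-verified Lean document; each statement's English description precedes it below -/
import Mathlib

section
/- For every internal inductive game tree T and every action a ∈ A(T), the baseline-corrected sampled value is an unbiased estimate of the expected utility of the corresponding subtree: E_z[v̂(T, a; z)] = û(T_a), where the expectation is over the trajectory distribution of T. This holds for an arbitrary baseline assignment b. -/
/-- An inductive game tree: either a leaf carrying a utility `u`, or an internal node
carrying a nonempty finite action set `Fin (n+1)`, a subtree `child a` for each action,
a strategy distribution `σ`, a sampling distribution `q`, and baseline values `b`. -/
inductive GameTree : Type
  | leaf (u : ℝ) : GameTree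
  | node (n : ℕ) (child : Fin (n + 1) → GameTree)
      (σ : Fin (n + 1) → ℝ) (q : Fin (n + 1) → ℝ) (b : Fin (n + 1) → ℝ) : GameTree

namespace GameTree

/-- Expected utility `û`: `û(leaf u) = u` and `û(T) = Σ_a σ_T(a)·û(T_a)` at internal nodes. -/
noncomputable def eu : GameTree → ℝ
  | leaf u => u
  | node n child σ _ _ => ∑ a : Fin (n + 1), σ a * eu (child a)

/-- Validity: at every internal node, `σ` is a probability distribution and `q` is a
probability distribution with `q a > 0` for every action `a`. -/
def Valid : GameTree → Prop
  | leaf _ => True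
  | node n child σ q _ =>
      (∀ a, 0 ≤ σ a) ∧ (∑ a : Fin (n + 1), σ a = 1) ∧
      (∀ a, 0 < q a) ∧ (∑ a : Fin (n + 1), q a = 1) ∧
      (∀ a, Valid (child a))

/-- A sampled trajectory of `T`: a root-to-leaf path in the tree. -/
inductive Traj : GameTree → Type
  | leaf (u : ℝ) : Traj (.leaf u)
  | step {n : ℕ} {child : Fin (n + 1) → GameTree} {σ q b : Fin (n + 1) → ℝ}
      (astar : Fin (n + 1)) (t : Traj (child astar)) : Traj (.node n child σ q b)

/-- Expectation `E_z[f(z)]` over the trajectory distribution (each trajectory has the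
product of the `q`-probabilities of its edges as probability). -/
noncomputable def expT : (T : GameTree) → (Traj T → ℝ) → ℝ
  | leaf u, f => f (.leaf u)
  | node n child _ q _, f =>
      ∑ a : Fin (n + 1), q a * expT (child a) (fun t => f (.step a t))

/-- Variance `Var_z[f(z)]` over the trajectory distribution. -/
noncomputable def varT (T : GameTree) (f : Traj T → ℝ) : ℝ :=
  expT T (fun z => (f z - expT T f) ^ 2)

/-- Baseline-corrected sampled value `v̂(T; z) = Σ_a σ_T(a)·v̂(T, a; z)`, with
`v̂(T, a; z) = (𝟙[a = a*]/q_T(a))·(v̂(T_a; z') − b_T(a)) + b_T(a)`. -/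
noncomputable def bval : {T : GameTree} → Traj T → ℝ
  | _, .leaf u => u
  | _, @Traj.step n child σ q b astar t =>
      ∑ a : Fin (n + 1), σ a *
        ((if a = astar then (1 : ℝ) else 0) / q a * (bval t - b a) + b a)

/-- Baseline-corrected sampled action value `v̂(T, a; z)` at an internal root:
`(𝟙[a = a*]/q_T(a))·(v̂(T_a; z') − b_T(a)) + b_T(a)` where `z = a*·z'`. -/
noncomputable def bvalAct {n : ℕ} {child : Fin (n + 1) → GameTree}
    {σ q b : Fin (n + 1) → ℝ}
    (a : Fin (n + 1)) : Traj (.node n child σ q b) → ℝ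
  | .step astar t => (if a = astar then (1 : ℝ) else 0) / q a * (bval t - b a) + b a

end GameTree

namespace GameTree

theorem expT_affine : ∀ (T : GameTree) (f : Traj T → ℝ) (c d : ℝ), Valid T →
    expT T (fun t => c * f t + d) = c * expT T f + d := by
  intro T
  induction T with
  | leaf u => intro f c d _; simp [expT]
  | node n child σ q b ih =>
    intro f c d hV
    obtain ⟨_, _, hq, hq1, hVc⟩ := hV
    simp only [expT]
    have h : ∀ a : Fin (n+1),
        expT (child a) (fun t => c * f (.step a t) + d)
          = c * expT (child a) (fun t => f (.step a t)) + d := fun a =>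
      ih a _ c d (hVc a)
    simp only [h]
    rw [show (∑ a : Fin (n+1), q a * (c * expT (child a) (fun t => f (.step a t)) + d))
        = c * (∑ a : Fin (n+1), q a * expT (child a) (fun t => f (.step a t)))
          + (∑ a : Fin (n+1), q a) * d by
      rw [Finset.mul_sum, Finset.sum_mul, ← Finset.sum_add_distrib]; congr 1; ext a; ring]
    rw [hq1]; ring

theorem expT_bval : ∀ (T : GameTree), Valid T → expT T bval = eu T := by
  intro T
  induction T with
  | leaf u => intro _; simp [expT, bval, eu]
  | node n child σ q b ih =>
    intro hV
    obtain ⟨hσ, hσ1, hq, hq1, hVc⟩ := hV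
    simp only [expT, eu]
    have key : ∀ astar : Fin (n+1),
        expT (child astar) (fun t => bval (.step astar t (σ := σ) (q := q) (b := b)))
          = σ astar / q astar * eu (child astar)
            + (- (σ astar / q astar) * b astar + ∑ a : Fin (n+1), σ a * b a) := by
      intro astar
      have hform : ∀ x : ℝ,
          (∑ a : Fin (n+1), σ a * ((if a = astar then (1:ℝ) else 0) / q a * (x - b a) + b a))
            = (σ astar / q astar) * x
              + (- (σ astar / q astar) * b astar + ∑ a : Fin (n+1), σ a * b a) := by
        intro x
        have h1 : (∑ a : Fin (n+1), σ a * ((if a = astar then (1:ℝ) else 0) / q a * (x - b a) + b a))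
            = (∑ a : Fin (n+1), σ a * ((if a = astar then (1:ℝ) else 0) / q a * (x - b a)))
              + ∑ a : Fin (n+1), σ a * b a := by
          rw [← Finset.sum_add_distrib]; congr 1; ext a; ring
        have h2 : (∑ a : Fin (n+1), σ a * ((if a = astar then (1:ℝ) else 0) / q a * (x - b a)))
            = σ astar / q astar * (x - b astar) := by
          rw [Finset.sum_eq_single astar]
          · simp; ring
          · intro a _ ha; simp [ha]
          · simp
        rw [h1, h2]; ring
      have heq : (fun t : Traj (child astar) =>
          bval (.step astar t (σ := σ) (q := q) (b := b)))
          = fun t => (σ astar / q astar) * bval t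
              + (- (σ astar / q astar) * b astar + ∑ a : Fin (n+1), σ a * b a) := by
        funext t; exact hform (bval t)
      rw [heq, expT_affine _ _ _ _ (hVc astar), ih astar (hVc astar)]
    simp only [key]
    have hcan : ∀ a : Fin (n+1), q a * (σ a / q a) = σ a := by
      intro a
      rw [mul_comm, div_mul_cancel₀ _ (hq a).ne']
    rw [show (∑ a : Fin (n+1), q a * (σ a / q a * eu (child a)
          + (-(σ a / q a) * b a + ∑ a' : Fin (n+1), σ a' * b a')))
        = (∑ a : Fin (n+1), σ a * eu (child a))
          - (∑ a : Fin (n+1), σ a * b a)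
          + (∑ a : Fin (n+1), q a) * (∑ a' : Fin (n+1), σ a' * b a') by
      rw [Finset.sum_mul, ← Finset.sum_sub_distrib, ← Finset.sum_add_distrib]
      congr 1; ext a
      rw [show q a * (σ a / q a * eu (child a) + (-(σ a / q a) * b a + ∑ a' : Fin (n+1), σ a' * b a'))
          = q a * (σ a / q a) * eu (child a) - q a * (σ a / q a) * b a
            + q a * (∑ a' : Fin (n+1), σ a' * b a') by ring, hcan]]
    rw [hq1]; ring

end GameTree

/-- For every internal inductive game tree and every action `a`, the
baseline-corrected sampled value is an unbiased estimate of the expected utility of the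
corresponding subtree: `E_z[v̂(T, a; z)] = û(T_a)`, for an arbitrary baseline. -/
theorem bvalAct_unbiased (n : ℕ) (child : Fin (n + 1) → GameTree)
    (σ q b : Fin (n + 1) → ℝ)
    (hV : GameTree.Valid (.node n child σ q b)) (a : Fin (n + 1)) :
    GameTree.expT (.node n child σ q b) (GameTree.bvalAct a) = GameTree.eu (child a) := by
  obtain ⟨hσ, hσ1, hq, hq1, hVc⟩ := hV
  simp only [GameTree.expT]
  set A : ℝ := 1 / q a * GameTree.eu (child a) + (b a - b a / q a) with hA
  have key : ∀ astar : Fin (n+1),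
      GameTree.expT (child astar)
        (fun t => GameTree.bvalAct a (.step astar t (σ := σ) (q := q) (b := b)))
        = if a = astar then A else b a := by
    intro astar
    by_cases h : a = astar
    · subst h
      have heq : (fun t : GameTree.Traj (child a) =>
          GameTree.bvalAct a (.step a t (σ := σ) (q := q) (b := b)))
          = fun t => (1 / q a) * GameTree.bval t + (b a - b a / q a) := by
        funext t; simp [GameTree.bvalAct]; ring
      rw [heq, GameTree.expT_affine _ _ _ _ (hVc a), GameTree.expT_bval _ (hVc a)]
      simp [hA]
    · have heq : (fun t : GameTree.Traj (child astar) =>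
          GameTree.bvalAct a (.step astar t (σ := σ) (q := q) (b := b)))
          = fun t => (0 : ℝ) * GameTree.bval t + b a := by
        funext t; simp [GameTree.bvalAct, h]
      rw [heq, GameTree.expT_affine _ _ _ _ (hVc astar)]
      simp [h]
  simp only [key]
  have hsplit : (∑ x : Fin (n+1), q x * if a = x then A else b a)
      = (∑ x : Fin (n+1), if a = x then q x * A - q x * b a else 0)
        + ∑ x : Fin (n+1), q x * b a := by
    rw [← Finset.sum_add_distrib]
    congr 1; ext x
    by_cases h : a = x <;> simp [h]
  rw [hsplit, Finset.sum_ite_eq Finset.univ a (fun x => q x * A - q x * b a)]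
  simp only [Finset.mem_univ, if_true]
  rw [← Finset.sum_mul, hq1]
  have hqa := (hq a).ne'
  rw [hA]
  field_simp
  ring
end

section
/- Suppose the baseline is everywhere exact, i.e., for every internal subtree T' occurring in the inductive game tree T and every action a' ∈ A(T'), b_{T'}(a') = û(T'_{a'}). Then for every trajectory z of T and every action a ∈ A(T) (when T is internal), the baseline-corrected values are deterministic and equal to the true expected utilities: v̂(T, a; z) = û(T_a) and v̂(T; z) = û(T). -/
namespace GameTree

/-- The baseline is everywhere exact: `b_h(a) = û(h_a)` at every internal node `h` of the
tree and every action `a ∈ A(h)`. -/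
def ExactBaseline : GameTree → Prop
  | leaf _ => True
  | node _ child _ _ b => (∀ a, b a = eu (child a)) ∧ ∀ a, ExactBaseline (child a)

end GameTree

/-- If the baseline is everywhere exact (`b_{T'}(a') = û(T'_{a'})` for
every internal subtree `T'` and action `a'`), then for every trajectory `z` the
baseline-corrected values are deterministic and equal the true expected utilities:
`v̂(T; z) = û(T)` and, at internal `T`, `v̂(T, a; z) = û(T_a)` for every `a ∈ A(T)`. -/
theorem exactBaseline_deterministic :
    (∀ (T : GameTree), T.Valid → GameTree.ExactBaseline T →
      ∀ z : GameTree.Traj T, GameTree.bval z = GameTree.eu T) ∧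
    (∀ (n : ℕ) (child : Fin (n + 1) → GameTree) (σ q b : Fin (n + 1) → ℝ),
      GameTree.Valid (.node n child σ q b) →
      GameTree.ExactBaseline (.node n child σ q b) →
      ∀ (a : Fin (n + 1)) (z : GameTree.Traj (.node n child σ q b)),
        GameTree.bvalAct a z = GameTree.eu (child a)) := by
  have main : ∀ (T : GameTree), GameTree.ExactBaseline T →
      ∀ z : GameTree.Traj T, GameTree.bval z = GameTree.eu T := by
    intro T hEB z
    induction z with
    | leaf u => simp [GameTree.bval, GameTree.eu]
    | @step n child σ q b astar t ih =>
        obtain ⟨hb, hrec⟩ := hEB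
        have hbv : GameTree.bval t = GameTree.eu (child astar) := ih (hrec astar)
        simp only [GameTree.bval, GameTree.eu]
        apply Finset.sum_congr rfl
        intro a _
        by_cases h : a = astar
        · subst h
          simp [hbv, hb a]
        · simp [h, hb a]
  refine ⟨fun T _ => main T, ?_⟩
  intro n child σ q b _ hEB a z
  obtain ⟨hb, hrec⟩ := hEB
  cases z with
  | step astar t =>
      have hbv : GameTree.bval t = GameTree.eu (child astar) := main _ (hrec astar) t
      by_cases h : a = astar
      · subst h
        simp [GameTree.bvalAct, hbv, hb a]
      · simp [GameTree.bvalAct, h, hb a]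
end

section
/- Suppose the baseline is everywhere exact, i.e., for every internal subtree T' occurring in the inductive game tree T and every action a' ∈ A(T'), b_{T'}(a') = û(T'_{a'}). Then for every internal game tree T and every action a ∈ A(T), the baseline-corrected sampled value has zero variance: Var_z[v̂(T, a; z)] = 0. -/
namespace GameTree

lemma bval_eq_eu : ∀ {T : GameTree}, ExactBaseline T → ∀ t : Traj T, bval t = eu T
  | .leaf u, _, .leaf _ => rfl
  | .node n child σ q b, hB, .step astar t => by
    simp only [bval, eu]
    refine Finset.sum_congr rfl fun a _ => ?_
    rw [hB.1 a]
    by_cases h : a = astar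
    · subst h
      rw [bval_eq_eu (hB.2 a) t]
      simp
    · simp [h]

lemma expT_const : ∀ {T : GameTree}, Valid T → ∀ c : ℝ, expT T (fun _ => c) = c
  | .leaf u, _, c => rfl
  | .node n child σ q b, hV, c => by
    simp only [expT]
    have : ∀ a : Fin (n + 1), q a * expT (child a) (fun _ => c) = q a * c := fun a => by
      rw [expT_const (hV.2.2.2.2 a) c]
    rw [Finset.sum_congr rfl fun a _ => this a, ← Finset.sum_mul, hV.2.2.2.1, one_mul]

lemma expT_congr : ∀ {T : GameTree} (f g : Traj T → ℝ), (∀ t, f t = g t) → expT T f = expT T g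
  | .leaf u, f, g, h => h _
  | .node n child σ q b, f, g, h => by
    simp only [expT]
    exact Finset.sum_congr rfl fun a _ =>
      congrArg _ (expT_congr _ _ fun t => h (.step a t))

end GameTree

/-- If the baseline is everywhere exact (`b_{T'}(a') = û(T'_{a'})` for
every internal subtree `T'` and action `a'`), then for every internal game tree and every
action `a`, the baseline-corrected sampled value has zero variance:
`Var_z[v̂(T, a; z)] = 0`. -/
theorem exactBaseline_zeroVariance (n : ℕ) (child : Fin (n + 1) → GameTree)
    (σ q b : Fin (n + 1) → ℝ)
    (hV : GameTree.Valid (.node n child σ q b))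
    (hB : GameTree.ExactBaseline (.node n child σ q b)) (a : Fin (n + 1)) :
    GameTree.varT (.node n child σ q b) (GameTree.bvalAct a) = 0 := by
  have hconst : ∀ t : GameTree.Traj (.node n child σ q b),
      GameTree.bvalAct a t = b a := by
    intro t
    cases t with
    | step astar t =>
      simp only [GameTree.bvalAct]
      by_cases h : a = astar
      · subst h
        rw [GameTree.bval_eq_eu (hB.2 a) t, ← hB.1 a]
        simp
      · simp [h]
  unfold GameTree.varT
  have he : GameTree.expT (.node n child σ q b) (GameTree.bvalAct a) = b a := by
    rw [GameTree.expT_congr _ (fun _ => b a) hconst, GameTree.expT_const hV]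
  rw [GameTree.expT_congr _ (fun _ => (0:ℝ)) (fun t => by rw [hconst t, he]; ring),
    GameTree.expT_const hV]
end

section
/- Predictive baseline update invariance: let T be an internal inductive game tree, z* a fixed root-to-leaf path in T ending at a leaf with utility u(z*), ũ a function assigning a real value to each leaf of T, and σ' an alternative strategy assignment giving each internal node h of T a distribution σ'_h on A(h) such that σ'_h = σ_h for every internal node h not lying on z*. Assume that for every internal node h of T and every a ∈ A(h), the baseline satisfies b_h(a) = Σ_{z ∈ Z[h·a]} π^σ(h·a, z)·ũ(z). Let ũ' agree with ũ on all leaves except ũ'(leaf of z*) = u(z*). Define predictive values recursively along z*: at the leaf of z*, v̂' = u(z*); at an internal node h on z* whose next action along z* is a*, set v̂'(h, a*) = v̂'(h·a*), v̂'(h, a) = b_h(a) for every a ∈ A(h) with a ≠ a*, and v̂'(h) = Σ_{a ∈ A(h)} σ'_h(a)·v̂'(h, a). Then for every node h on z*, v̂'(h) = Σ_{z ∈ Z[h]} π^{σ'}(h, z)·ũ'(z), and for every internal node h on z* with next action a*, v̂'(h, a*) = Σ_{z ∈ Z[h·a*]} π^{σ'}(h·a*, z)·ũ'(z). -/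
namespace GameTree

/-- The utility `u(z)` of the leaf at which the trajectory `z` ends. -/
noncomputable def leafU : {T : GameTree} → Traj T → ℝ
  | _, .leaf u => u
  | _, .step _ t => leafU t

/-- An alternative strategy assignment `σ'`: a vector of action weights at every internal
node of the tree. -/
def Strat : GameTree → Type
  | leaf _ => PUnit
  | node n child _ _ _ => (Fin (n + 1) → ℝ) × ((a : Fin (n + 1)) → Strat (child a))

/-- The alternative strategy assignment is a probability distribution on `A(h)` at every
internal node `h`. -/
def StratValid : {T : GameTree} → Strat T → Prop
  | .leaf _, _ => True
  | .node n _ _ _ _, s =>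
      (∀ a, 0 ≤ s.1 a) ∧ (∑ a : Fin (n + 1), s.1 a = 1) ∧ ∀ a, StratValid (s.2 a)

/-- The alternative strategy assignment coincides with the tree's own strategy `σ` at
every internal node of the tree. -/
def StratEqOrig : {T : GameTree} → Strat T → Prop
  | .leaf _, _ => True
  | .node _ _ σ _ _, s => s.1 = σ ∧ ∀ a, StratEqOrig (s.2 a)

/-- `σ'_h = σ_h` for every internal node `h` not lying on the given path `z*`. -/
def StratAgreesOff : {T : GameTree} → Strat T → Traj T → Prop
  | .leaf _, _, _ => True
  | .node _ _ _ _ _, s, .step astar t =>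
      StratAgreesOff (s.2 astar) t ∧ ∀ a, a ≠ astar → StratEqOrig (s.2 a)

/-- `Σ_{z ∈ Z[T]} π^σ(root, z)·g(z)`: the expectation of the leaf function `g` under the
tree's own strategy `σ` (the `σ`-weighted sum over all leaves `Z[T]` of the tree). -/
noncomputable def euW : (T : GameTree) → (Traj T → ℝ) → ℝ
  | .leaf u, g => g (.leaf u)
  | .node n child σ _ _, g =>
      ∑ a : Fin (n + 1), σ a * euW (child a) (fun t => g (.step a t))

/-- The baseline satisfies `b_h(a) = Σ_{z ∈ Z[h·a]} π^σ(h·a, z)·g(z)` at every internal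
node `h` of the tree and every action `a ∈ A(h)`, where `g` assigns a value to each leaf. -/
def PredBaseline : (T : GameTree) → (Traj T → ℝ) → Prop
  | .leaf _, _ => True
  | .node _ child _ _ b, g =>
      (∀ a, b a = euW (child a) (fun t => g (.step a t))) ∧
      ∀ a, PredBaseline (child a) (fun t => g (.step a t))

/-- `Σ_{z ∈ Z[T]} π^{σ'}(root, z)·g(z)`: the expectation of the leaf function `g` under
the alternative strategy assignment `s`. -/
noncomputable def euS : {T : GameTree} → Strat T → (Traj T → ℝ) → ℝ
  | .leaf u, _, g => g (.leaf u)
  | .node n _ _ _ _, s, g =>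
      ∑ a : Fin (n + 1), s.1 a * euS (s.2 a) (fun t => g (.step a t))

/-- The predictive value `v̂'(h)` computed recursively along the fixed path `z*`:
at the leaf of `z*` it is the leaf utility; at an internal node `h` on `z*` with next
action `a*`, `v̂'(h, a*) = v̂'(h·a*)`, `v̂'(h, a) = b_h(a)` for `a ≠ a*`, and
`v̂'(h) = Σ_a σ'_h(a)·v̂'(h, a)`. -/
noncomputable def predVal : {T : GameTree} → Strat T → Traj T → ℝ
  | .leaf _, _, .leaf u => u
  | .node n child σ q b, s, .step astar t =>
      ∑ a : Fin (n + 1), s.1 a * (if a = astar then predVal (s.2 astar) t else b a)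

/-- The conclusion of the predictive-baseline invariance statement, asserted at every node
`h` on the fixed path `z*`: `v̂'(h) = Σ_{z ∈ Z[h]} π^{σ'}(h, z)·g(z)`, and at every internal
node `h` on `z*` with next action `a*` also the action-value form
`v̂'(h, a*) = Σ_{z ∈ Z[h·a*]} π^{σ'}(h·a*, z)·g(z)`. -/
def PredConcl : {T : GameTree} → Strat T → (Traj T → ℝ) → Traj T → Prop
  | .leaf _, s, g, z => predVal s z = euS s g
  | .node _ _ _ _ _, s, g, .step astar t =>
      predVal s (.step astar t) = euS s g ∧
      predVal (s.2 astar) t = euS (s.2 astar) (fun t' => g (.step astar t')) ∧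
      PredConcl (s.2 astar) (fun t' => g (.step astar t')) t

end GameTree

namespace GameTree

lemma euS_eq_euW : ∀ (T : GameTree) (s : Strat T), StratEqOrig s →
    ∀ g, euS s g = euW T g
  | .leaf u, s, _, g => rfl
  | .node n child σ q b, s, h, g => by
      simp only [euS, euW, h.1]
      exact Finset.sum_congr rfl fun a _ => by
        rw [euS_eq_euW (child a) (s.2 a) (h.2 a)]

lemma predConcl_fst : ∀ {T : GameTree} (s : Strat T) (g : Traj T → ℝ) (z : Traj T),
    PredConcl s g z → predVal s z = euS s g
  | .leaf u, s, g, .leaf _, h => h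
  | .node n child σ q b, s, g, .step astar t, h => h.1

lemma main_aux : ∀ {T : GameTree} (s : Strat T) (z : Traj T),
    StratAgreesOff s z → ∀ ut : Traj T → ℝ, PredBaseline T ut →
    ∀ ut' : Traj T → ℝ, (∀ z', z' ≠ z → ut' z' = ut z') → ut' z = leafU z →
    PredConcl s ut' z
  | .leaf u, s, .leaf _, _, ut, _, ut', _, hstar => by
      show predVal s _ = euS s ut'
      simpa [predVal, euS, leafU] using hstar.symm
  | .node n child σ q b, s, .step astar t, hoff, ut, hb, ut', hne, hstar => by
      have hinj : ∀ (a : Fin (n+1)) (t' : Traj (child a))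
          (h : (Traj.step a t' : Traj (.node n child σ q b)) = .step astar t),
          a = astar := by
        intro a t' h
        exact (Traj.step.injEq _ _ _ _ |>.mp h).1
      have IH : PredConcl (s.2 astar) (fun t' => ut' (.step astar t')) t := by
        refine main_aux (s.2 astar) t hoff.1 (fun t' => ut (.step astar t')) (hb.2 astar)
          _ (fun t' ht' => hne _ ?_) ?_
        · intro h
          obtain ⟨h1, h2⟩ := Traj.step.injEq _ _ _ _ |>.mp h
          exact ht' (eq_of_heq h2)
        · show ut' (.step astar t) = leafU t
          rw [hstar]; rfl
      have h2 : predVal (s.2 astar) t = euS (s.2 astar) (fun t' => ut' (.step astar t')) :=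
        predConcl_fst _ _ _ IH
      refine ⟨?_, h2, IH⟩
      show (∑ a : Fin (n+1), s.1 a * (if a = astar then predVal (s.2 astar) t else b a))
        = ∑ a : Fin (n+1), s.1 a * euS (s.2 a) (fun t' => ut' (.step a t'))
      refine Finset.sum_congr rfl fun a _ => ?_
      by_cases ha : a = astar
      · subst ha; simp [h2]
      · simp only [if_neg ha]
        have hb' : b a = euW (child a) (fun t' => ut (.step a t')) := hb.1 a
        have heq : euS (s.2 a) (fun t' => ut' (.step a t'))
            = euS (s.2 a) (fun t' => ut (.step a t')) := by
          congr 1; funext t'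
          exact hne _ (fun h => ha (hinj a t' h))
        rw [heq, euS_eq_euW (child a) (s.2 a) (hoff.2 a ha), hb']

end GameTree

/-- Predictive baseline update invariance. Let `T` be an internal game
tree, `z*` a fixed root-to-leaf path of `T`, `ũ` a function on the leaves of `T` (leaves
are identified with root-to-leaf paths), and `σ'` an alternative strategy assignment with
`σ'_h` a distribution on `A(h)` at every internal node `h` and `σ'_h = σ_h` off `z*`.
Assume `b_h(a) = Σ_{z ∈ Z[h·a]} π^σ(h·a, z)·ũ(z)` for every internal node `h` and
`a ∈ A(h)`. Let `ũ'` agree with `ũ` on all leaves except `ũ'(leaf of z*) = u(z*)`. Then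
the predictive values computed along `z*` satisfy, at every node `h` on `z*`,
`v̂'(h) = Σ_{z ∈ Z[h]} π^{σ'}(h, z)·ũ'(z)`, and at every internal node `h` on `z*` with
next action `a*`, `v̂'(h, a*) = Σ_{z ∈ Z[h·a*]} π^{σ'}(h·a*, z)·ũ'(z)`. -/
theorem predictive_update_invariance (n : ℕ) (child : Fin (n + 1) → GameTree)
    (σ q b : Fin (n + 1) → ℝ)
    (hV : GameTree.Valid (.node n child σ q b))
    (s : GameTree.Strat (.node n child σ q b)) (hs : GameTree.StratValid s)
    (zstar : GameTree.Traj (.node n child σ q b))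
    (hoff : GameTree.StratAgreesOff s zstar)
    (ut : GameTree.Traj (.node n child σ q b) → ℝ)
    (hb : GameTree.PredBaseline (.node n child σ q b) ut)
    (ut' : GameTree.Traj (.node n child σ q b) → ℝ)
    (hne : ∀ z : GameTree.Traj (.node n child σ q b), z ≠ zstar → ut' z = ut z)
    (hstar : ut' zstar = GameTree.leafU zstar) :
    GameTree.PredConcl s ut' zstar := by
  exact GameTree.main_aux s zstar hoff ut hb ut' hne hstar
end
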